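/- arXiv:2108.02316 — 3 statements merged into one kernel-verified Lean document; each statement's English description precedes it below -/
import Mathlib

section
/- Let α, ε > 0, let p be a probability measure on ℝ^k, let G : ℝ^k → [0,∞) be measurable with ∫ G^{α+ε} dp < ∞, and let c ≥ 0. Then ∫ G(f)^α (1 − exp(−c G(f)^α)) p(df) ≤ (∫ G^{α+ε} dp)^{α/(α+ε)} · (c ∫ G^α dp)^{ε/(α+ε)}. -/
open MeasureTheory

/-!
Put `g = 1 - exp (-c Gᵅ)`, which takes values in `[0, 1]`. Hölder's inequality with the conjugate
exponents `(α + ε)/α` and `(α + ε)/ε` bounds `∫ Gᵅ g` by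
`(∫ G^(α+ε))^(α/(α+ε)) (∫ g^((α+ε)/ε))^(ε/(α+ε))`, and since `(α + ε)/ε ≥ 1` and `g ≤ 1`,
`g^((α+ε)/ε) ≤ g ≤ c Gᵅ`.
-/

lemma Real.holderConjugate_add_div {a b : ℝ} (ha : 0 < a) (hb : 0 < b) :
    ((a + b) / a).HolderConjugate ((a + b) / b) := by
  rw [Real.holderConjugate_iff]
  refine ⟨by rw [lt_div_iff₀ ha]; linarith, ?_⟩
  field_simp

lemma Real.one_sub_exp_neg_nonneg {x : ℝ} (hx : 0 ≤ x) : 0 ≤ 1 - Real.exp (-x) :=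
  sub_nonneg.2 (Real.exp_le_one_iff.2 (neg_nonpos.2 hx))

lemma Real.one_sub_exp_neg_le_one (x : ℝ) : 1 - Real.exp (-x) ≤ 1 :=
  sub_le_self _ (Real.exp_pos _).le

lemma Real.one_sub_exp_neg_rpow_le {x q : ℝ} (hx : 0 ≤ x) (hq : 1 ≤ q) :
    (1 - Real.exp (-x)) ^ q ≤ x :=
  calc (1 - Real.exp (-x)) ^ q
      ≤ 1 - Real.exp (-x) :=
        Real.rpow_le_self_of_le_one (Real.one_sub_exp_neg_nonneg hx)
          (Real.one_sub_exp_neg_le_one x) hq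
    _ ≤ x := by linarith [Real.add_one_le_exp (-x)]

section Holder

variable {Ω : Type*} [MeasurableSpace Ω] {μ : Measure Ω} {α β : ℝ} {G : Ω → ℝ}

lemma memLp_rpow_of_integrable_rpow (hα : 0 < α) (hβ : 0 < β) (hG0 : ∀ x, 0 ≤ G x)
    (hGm : AEStronglyMeasurable G μ) (hint : Integrable (fun x => G x ^ β) μ) :
    MemLp (fun x => G x ^ α) (ENNReal.ofReal (β / α)) μ := by
  have hG : MemLp G (ENNReal.ofReal β) μ := by
    rw [← integrable_norm_rpow_iff hGm (by simpa using hβ) ENNReal.ofReal_ne_top]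
    simpa [ENNReal.toReal_ofReal hβ.le, Real.norm_of_nonneg (hG0 _)] using hint
  simpa [ENNReal.toReal_ofReal hα.le, Real.norm_of_nonneg (hG0 _),
    ENNReal.ofReal_div_of_pos hα] using hG.norm_rpow_div (ENNReal.ofReal α)

lemma integral_rpow_mul_le_of_le_one [IsFiniteMeasure μ] {ε : ℝ} {g : Ω → ℝ}
    (hα : 0 < α) (hε : 0 < ε) (hG0 : ∀ x, 0 ≤ G x) (hGm : AEStronglyMeasurable G μ)
    (hint : Integrable (fun x => G x ^ (α + ε)) μ) (hg0 : ∀ x, 0 ≤ g x) (hg1 : ∀ x, g x ≤ 1)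
    (hgm : AEStronglyMeasurable g μ) :
    ∫ x, G x ^ α * g x ∂μ
      ≤ (∫ x, G x ^ (α + ε) ∂μ) ^ (α / (α + ε))
        * (∫ x, g x ^ ((α + ε) / ε) ∂μ) ^ (ε / (α + ε)) := by
  have hαε : 0 < α + ε := by linarith
  have hg : MemLp g (ENNReal.ofReal ((α + ε) / ε)) μ :=
    .of_bound hgm 1 (.of_forall fun x => by rw [Real.norm_of_nonneg (hg0 x)]; exact hg1 x)
  have holder := integral_mul_le_Lp_mul_Lq_of_nonneg (Real.holderConjugate_add_div hα hε)
    (.of_forall fun x => Real.rpow_nonneg (hG0 x) α) (.of_forall hg0)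
    (memLp_rpow_of_integrable_rpow hα hαε hG0 hGm hint) hg
  have hpow : ∀ x, (G x ^ α) ^ ((α + ε) / α) = G x ^ (α + ε) := fun x => by
    rw [← Real.rpow_mul (hG0 x), mul_div_cancel₀ _ hα.ne']
  simpa only [hpow, one_div_div] using holder

end Holder

/-- The Hölder-inequality estimate at the heart of Lemma 2 of the paper:
`∫ G^α (1 − e^{−c G^α}) dp ≤ (∫ G^{α+ε} dp)^{α/(α+ε)} (c ∫ G^α dp)^{ε/(α+ε)}`. -/
theorem holder_truncation_estimate
    (k : ℕ) (α ε : ℝ) (hα : 0 < α) (hε : 0 < ε)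
    (p : Measure (EuclideanSpace ℝ (Fin k))) [IsProbabilityMeasure p]
    (G : EuclideanSpace ℝ (Fin k) → ℝ) (hGm : Measurable G) (hG0 : ∀ f, 0 ≤ G f)
    (hint : Integrable (fun f => G f ^ (α + ε)) p)
    (c : ℝ) (hc : 0 ≤ c) :
    ∫ f, G f ^ α * (1 - Real.exp (-(c * G f ^ α))) ∂p
      ≤ (∫ f, G f ^ (α + ε) ∂p) ^ (α / (α + ε))
        * (c * ∫ f, G f ^ α ∂p) ^ (ε / (α + ε)) := by
  have hαε : 0 < α + ε := by linarith
  have hcG : ∀ f, 0 ≤ c * G f ^ α := fun f => mul_nonneg hc (Real.rpow_nonneg (hG0 f) α)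
  set g := fun f => 1 - Real.exp (-(c * G f ^ α))
  have hg0 : ∀ f, 0 ≤ g f := fun f => Real.one_sub_exp_neg_nonneg (hcG f)
  have hgm : Measurable g := ((hGm.pow_const α).const_mul c).neg.exp.const_sub 1
  have hGα : Integrable (fun f => G f ^ α) p :=
    (memLp_rpow_of_integrable_rpow hα hαε hG0 hGm.aestronglyMeasurable hint).integrable
      (by rw [ENNReal.one_le_ofReal, le_div_iff₀ hα]; linarith)
  have hgq : ∫ f, g f ^ ((α + ε) / ε) ∂p ≤ c * ∫ f, G f ^ α ∂p := by
    rw [← integral_const_mul]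
    refine integral_mono_of_nonneg (ae_of_all _ fun f => ?_) (hGα.const_mul c)
      (ae_of_all _ fun f => ?_)
    · exact Real.rpow_nonneg (hg0 f) _
    · exact Real.one_sub_exp_neg_rpow_le (hcG f) (by rw [le_div_iff₀ hε]; linarith)
  calc ∫ f, G f ^ α * g f ∂p
      ≤ (∫ f, G f ^ (α + ε) ∂p) ^ (α / (α + ε))
        * (∫ f, g f ^ ((α + ε) / ε) ∂p) ^ (ε / (α + ε)) :=
        integral_rpow_mul_le_of_le_one hα hε hG0 hGm.aestronglyMeasurable hint
          hg0 (fun f => Real.one_sub_exp_neg_le_one _)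
          hgm.aestronglyMeasurable
    _ ≤ _ := by
        have hGε0 : 0 ≤ ∫ f, G f ^ (α + ε) ∂p :=
          integral_nonneg fun f => Real.rpow_nonneg (hG0 f) _
        have hgq0 : 0 ≤ ∫ f, g f ^ ((α + ε) / ε) ∂p :=
          integral_nonneg fun f => Real.rpow_nonneg (hg0 f) _
        gcongr
end

section
/- Let α, ε > 0 and c ≥ 0, let (p_n)_{n ≥ 1} be a sequence of probability measures on ℝ^k, and let G : ℝ^k → [0,∞) be measurable with limsup_{n→∞} ∫ G^{α+ε} dp_n < ∞. Then ∫ G(f)^α (1 − exp(−(c/n) G(f)^α)) p_n(df) → 0 as n → ∞. -/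
/-!
Split `G` at the level `G^ε = L`. Where `G^ε ≤ L`, the bound `1 - e^{-s} ≤ s` makes the
integrand at most `(c/n) L^{2α/ε}`, which vanishes as `n → ∞`; where `G^ε > L`, the integrand is
at most `G^α ≤ G^{α+ε}/L`, whose integral is eventually at most `(1/L) limsup ∫ G^{α+ε} dp_n`.
Letting `L → ∞` gives the claim.
-/

open MeasureTheory Filter Topology
open scoped ENNReal

theorem Real.rpow_mul_one_sub_exp_neg_le {α ε t x L : ℝ} (hα : 0 ≤ α) (hε : 0 < ε)
    (ht : 0 ≤ t) (hx : 0 ≤ x) (hL : 0 < L) :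
    x ^ α * (1 - exp (-(t * x ^ α))) ≤ t * L ^ (2 * α / ε) + L⁻¹ * x ^ (α + ε) := by
  have hxα : 0 ≤ x ^ α := rpow_nonneg hx α
  have hsmall : 0 ≤ L⁻¹ * x ^ (α + ε) := by positivity
  have hlarge : 0 ≤ t * L ^ (2 * α / ε) := by positivity
  rcases le_or_gt (x ^ ε) L with hxL | hxL
  · have hxα_le : x ^ α ≤ L ^ (α / ε) := by
      calc x ^ α = (x ^ ε) ^ (α / ε) := by rw [← rpow_mul hx, mul_div_cancel₀ _ hε.ne']
        _ ≤ L ^ (α / ε) := by gcongr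
    calc x ^ α * (1 - exp (-(t * x ^ α)))
        ≤ x ^ α * (t * x ^ α) := by gcongr; linarith [one_sub_le_exp_neg (t * x ^ α)]
      _ = t * (x ^ α) ^ 2 := by ring
      _ ≤ t * (L ^ (α / ε)) ^ 2 := by gcongr
      _ = t * L ^ (2 * α / ε) := by rw [← rpow_natCast, ← rpow_mul hL.le]; ring_nf
      _ ≤ _ := le_add_of_nonneg_right hsmall
  · calc x ^ α * (1 - exp (-(t * x ^ α)))
        ≤ x ^ α := mul_le_of_le_one_right hxα (by linarith [exp_nonneg (-(t * x ^ α))])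
      _ ≤ L⁻¹ * x ^ ε * x ^ α := le_mul_of_one_le_left hxα <| by
          rw [inv_mul_eq_div, one_le_div hL]; exact hxL.le
      _ = L⁻¹ * x ^ (α + ε) := by rw [rpow_add' hx (by positivity)]; ring
      _ ≤ _ := le_add_of_nonneg_left hlarge

theorem ENNReal.tendsto_nhds_zero_of_limsup_le_inv_natCast_mul {ι : Type*} {l : Filter ι}
    {u : ι → ℝ≥0∞} {S : ℝ≥0∞} (hS : S ≠ ∞)
    (h : ∀ L : ℕ, L ≠ 0 → limsup u l ≤ (L : ℝ≥0∞)⁻¹ * S) :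
    Tendsto u l (𝓝 0) := by
  have hlimsup : limsup u l ≤ 0 := by
    have hlim : Tendsto (fun L : ℕ => (L : ℝ≥0∞)⁻¹ * S) atTop (𝓝 0) := by
      simpa using ENNReal.Tendsto.mul_const ENNReal.tendsto_inv_nat_nhds_zero (Or.inr hS)
    exact ge_of_tendsto hlim ((eventually_ne_atTop 0).mono h)
  exact tendsto_of_le_liminf_of_limsup_le zero_le hlimsup

theorem MeasureTheory.limsup_lintegral_le_of_le_add_mul {X ι : Type*} [MeasurableSpace X]
    {l : Filter ι} {μ : ι → Measure X} [∀ i, IsProbabilityMeasure (μ i)]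
    {F : ι → X → ℝ≥0∞} {H : X → ℝ≥0∞} {a : ι → ℝ≥0∞} {r : ℝ≥0∞}
    (ha : Tendsto a l (𝓝 0)) (hr : r ≠ ∞) (hF : ∀ i x, F i x ≤ a i + r * H x) :
    limsup (fun i => ∫⁻ x, F i x ∂μ i) l ≤ r * limsup (fun i => ∫⁻ x, H x ∂μ i) l := by
  have hint : ∀ i, ∫⁻ x, F i x ∂μ i ≤ a i + r * ∫⁻ x, H x ∂μ i := fun i =>
    calc ∫⁻ x, F i x ∂μ i ≤ ∫⁻ x, a i + r * H x ∂μ i := lintegral_mono (hF i)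
      _ = a i + r * ∫⁻ x, H x ∂μ i := by
        rw [lintegral_add_left measurable_const, lintegral_const, measure_univ, mul_one,
          lintegral_const_mul' r H hr]
  calc limsup (fun i => ∫⁻ x, F i x ∂μ i) l
      ≤ limsup (a + fun i => r * ∫⁻ x, H x ∂μ i) l := limsup_le_limsup (.of_forall hint)
    _ = r * limsup (fun i => ∫⁻ x, H x ∂μ i) l := by
      rw [ENNReal.limsup_add_of_left_tendsto_zero ha, ENNReal.limsup_const_mul_of_ne_top hr]

theorem truncation_term_tendsto_zero_general
    (k : ℕ) (α ε c : ℝ) (hα : 0 < α) (hε : 0 < ε) (hc : 0 ≤ c)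
    (p : ℕ → Measure (EuclideanSpace ℝ (Fin k))) (hp : ∀ n, IsProbabilityMeasure (p n))
    (G : EuclideanSpace ℝ (Fin k) → ℝ) (hG0 : ∀ f, 0 ≤ G f)
    (hlimsup : limsup (fun n => ∫⁻ f, ENNReal.ofReal (G f ^ (α + ε)) ∂(p n)) atTop < ⊤) :
    Tendsto
      (fun n : ℕ =>
        ∫⁻ f, ENNReal.ofReal (G f ^ α * (1 - Real.exp (-(c / (n : ℝ) * G f ^ α)))) ∂(p n))
      atTop (nhds 0) := by
  refine ENNReal.tendsto_nhds_zero_of_limsup_le_inv_natCast_mul hlimsup.ne fun L hL => ?_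
  have hL' : (0 : ℝ) < L := by positivity
  have hcn : ∀ n : ℕ, 0 ≤ c / n := fun n => div_nonneg hc n.cast_nonneg
  set a : ℕ → ℝ≥0∞ := fun n => ENNReal.ofReal (c / n * (L : ℝ) ^ (2 * α / ε))
  have ha : Tendsto a atTop (𝓝 0) := by
    simpa [a] using ENNReal.tendsto_ofReal
      ((tendsto_const_div_atTop_nhds_zero_nat c).mul_const ((L : ℝ) ^ (2 * α / ε)))
  refine limsup_lintegral_le_of_le_add_mul ha (by simpa using hL) fun n f => ?_
  calc ENNReal.ofReal (G f ^ α * (1 - Real.exp (-(c / n * G f ^ α))))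
      ≤ ENNReal.ofReal (c / n * (L : ℝ) ^ (2 * α / ε) + (L : ℝ)⁻¹ * G f ^ (α + ε)) :=
        ENNReal.ofReal_le_ofReal <|
          Real.rpow_mul_one_sub_exp_neg_le hα.le hε (hcn n) (hG0 f) hL'
    _ = a n + (L : ℝ≥0∞)⁻¹ * ENNReal.ofReal (G f ^ (α + ε)) := by
      rw [ENNReal.ofReal_add (mul_nonneg (hcn n) (by positivity))
          (mul_nonneg (by positivity) (Real.rpow_nonneg (hG0 f) _)),
        ENNReal.ofReal_mul (p := (L : ℝ)⁻¹) (by positivity), ENNReal.ofReal_inv_of_pos hL',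
        ENNReal.ofReal_natCast]

/-- Lemma 2 of the paper in deterministic form: if `limsup_n ∫ G^{α+ε} dp_n < ∞`, then
`∫ G^α (1 − e^{−(c/n) G^α}) dp_n → 0` as `n → ∞`. -/
theorem truncation_term_tendsto_zero
    (k : ℕ) (α ε c : ℝ) (hα : 0 < α) (hε : 0 < ε) (hc : 0 ≤ c)
    (p : ℕ → Measure (EuclideanSpace ℝ (Fin k))) (hp : ∀ n, IsProbabilityMeasure (p n))
    (G : EuclideanSpace ℝ (Fin k) → ℝ) (hGm : Measurable G) (hG0 : ∀ f, 0 ≤ G f)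
    (hlimsup : limsup (fun n => ∫⁻ f, ENNReal.ofReal (G f ^ (α + ε)) ∂(p n)) atTop < ⊤) :
    Tendsto
      (fun n : ℕ =>
        ∫⁻ f, ENNReal.ofReal (G f ^ α * (1 - Real.exp (-(c / (n : ℝ) * G f ^ α)))) ∂(p n))
      atTop (nhds 0) :=
  truncation_term_tendsto_zero_general k α ε c hα hε hc p hp G hG0 hlimsup
end

section
/- Let α ∈ (0,2), σ_w, σ_b > 0, let (F_j)_{j ≥ 1} be i.i.d. random vectors in ℝ^k, and let φ : ℝ → ℝ be measurable with E[‖φ∘F_1‖^α] < ∞. Let (w_j)_{j ≥ 1} be i.i.d. real random variables, each symmetric α-stable with scale σ_w, let b be symmetric α-stable with scale σ_b, and assume (F_j), (w_j), b are mutually independent. Define S_n = n^{−1/α} Σ_{j=1}^n w_j (φ∘F_j) + b 𝟏 ∈ ℝ^k. Then for every t ∈ ℝ^k, E[exp(i ⟨S_n, t⟩)] → exp(−σ_b^α |⟨𝟏, t⟩|^α − σ_w^α E[|⟨φ∘F_1, t⟩|^α]) as n → ∞. -/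
open MeasureTheory ProbabilityTheory Filter Topology
open scoped InnerProductSpace

/-!
Conditionally on the features `F`, the projection `⟪S_n, t⟫` is a linear combination of the
independent stable variables `w_j` and `b`, so its characteristic function is
`exp (-σ_b^α |⟪𝟏, t⟫|^α) * ∏_j exp (-σ_w^α |n^{-1/α} ⟪φ∘F_j, t⟫|^α)`; the scaling `n^{-1/α}`
turns each exponent into `-Y_j / n` with `Y_j = σ_w^α |⟪φ∘F_j, t⟫|^α`. Averaging over the i.i.d.
features gives `exp (-σ_b^α |⟪𝟏, t⟫|^α) * (E exp (-Y_1 / n))^n`. Finally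
`n (E exp (-Y_1 / n) - 1) → -E Y_1` by dominated convergence, since `|n (e^{-y/n} - 1)| ≤ y`
for `y ≥ 0`, and hence `(E exp (-Y_1 / n))^n → exp (-E Y_1)`.
-/

namespace ProbabilityTheory

variable {Ω : Type*} [MeasurableSpace Ω] {μ : Measure Ω}

lemma IndepFun.integral_comp_prodMk {β γ E : Type*} [MeasurableSpace β] [MeasurableSpace γ]
    [NormedAddCommGroup E] [NormedSpace ℝ E] [IsFiniteMeasure μ]
    {X : Ω → β} {Y : Ω → γ} (hXY : IndepFun X Y μ) (hX : AEMeasurable X μ)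
    (hY : AEMeasurable Y μ) {H : β × γ → E} (hH : Integrable H ((μ.map X).prod (μ.map Y))) :
    ∫ ω, H (X ω, Y ω) ∂μ = ∫ x, ∫ y, H (x, y) ∂(μ.map Y) ∂(μ.map X) := by
  have hmap := hXY.map_prod_eq_prod_map_map hX hY
  rw [← integral_prod _ hH, ← hmap, integral_map (hX.prodMk hY) (hmap ▸ hH.1)]

variable {𝕜 : Type*} [RCLike 𝕜]

lemma iIndepFun.integral_finset_prod_comp {ι : Type*} {β : ι → Type*}
    [∀ i, MeasurableSpace (β i)] {X : (i : ι) → Ω → β i} (hX : iIndepFun X μ)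
    (mX : ∀ i, AEMeasurable (X i) μ) {f : (i : ι) → β i → 𝕜}
    (hf : ∀ i, AEStronglyMeasurable (f i) (μ.map (X i))) (s : Finset ι) :
    ∫ ω, ∏ i ∈ s, f i (X i ω) ∂μ = ∏ i ∈ s, ∫ ω, f i (X i ω) ∂μ := by
  have h := (hX.precomp Subtype.val_injective (g := ((↑) : s → ι))).integral_fun_prod_comp
    (fun i => mX i) (fun i => hf i)
  rwa [Finset.prod_coe_sort s fun i => ∫ ω, f i (X i ω) ∂μ,
    funext fun ω => Finset.prod_coe_sort s fun i => f i (X i ω)] at h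

lemma iIndepFun.integral_prod_range_comp {β : Type*} [MeasurableSpace β] {X : ℕ → Ω → β}
    (hX : iIndepFun X μ) (mX : ∀ j, Measurable (X j)) (hid : ∀ j, IdentDistrib (X j) (X 0) μ μ)
    {f : β → 𝕜} (hf : Measurable f) (n : ℕ) :
    ∫ ω, ∏ j ∈ Finset.range n, f (X j ω) ∂μ = (∫ ω, f (X 0 ω) ∂μ) ^ n := by
  have hj (j : ℕ) : ∫ ω, f (X j ω) ∂μ = ∫ ω, f (X 0 ω) ∂μ := ((hid j).comp hf).integral_eq
  rw [hX.integral_finset_prod_comp (fun j => (mX j).aemeasurable)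
      (fun _ => hf.aestronglyMeasurable),
    Finset.prod_congr rfl fun j _ => hj j, Finset.prod_const,
    Finset.card_range]

lemma iIndepFun.integral_exp_I_mul_sum {ι : Type*} {X : ι → Ω → ℝ} (hX : iIndepFun X μ)
    (mX : ∀ i, Measurable (X i)) (s : Finset ι) (d : ι → ℝ) :
    ∫ ω, Complex.exp (Complex.I * ((∑ i ∈ s, d i * X i ω : ℝ) : ℂ)) ∂μ
      = ∏ i ∈ s, ∫ ω, Complex.exp (Complex.I * (d i : ℂ) * (X i ω : ℂ)) ∂μ := by
  have hprod : ∀ ω, Complex.exp (Complex.I * ((∑ i ∈ s, d i * X i ω : ℝ) : ℂ))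
      = ∏ i ∈ s, Complex.exp (Complex.I * (d i : ℂ) * (X i ω : ℂ)) := fun ω => by
    push_cast
    rw [Finset.mul_sum, Complex.exp_sum]
    simp only [mul_assoc]
  simp_rw [hprod]
  exact hX.integral_finset_prod_comp
    (f := fun i r => Complex.exp (Complex.I * (d i : ℂ) * (r : ℂ)))
    (fun i => (mX i).aemeasurable) (fun i => by fun_prop) s

end ProbabilityTheory

lemma tendsto_nat_mul_exp_neg_div_sub_one (y : ℝ) :
    Tendsto (fun n : ℕ => (n : ℝ) * (Real.exp (-(y / n)) - 1)) atTop (𝓝 (-y)) := by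
  have hderiv : HasDerivAt (fun t => Real.exp (-y * t)) (-y) 0 := by
    simpa using ((hasDerivAt_id (0 : ℝ)).const_mul (-y)).exp
  have hslope := hderiv.tendsto_slope_zero_right.comp
    (tendsto_inv_atTop_nhdsGT_zero.comp tendsto_natCast_atTop_atTop)
  refine hslope.congr fun n => ?_
  simp [div_eq_mul_inv]

lemma abs_nat_mul_exp_neg_div_sub_one_le {y : ℝ} (hy : 0 ≤ y) (n : ℕ) :
    |(n : ℝ) * (Real.exp (-(y / n)) - 1)| ≤ y := by
  have hle : Real.exp (-(y / n)) ≤ 1 := Real.exp_le_one_iff.mpr (neg_nonpos.mpr (by positivity))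
  have hge : 1 - y / n ≤ Real.exp (-(y / n)) := by linarith [Real.add_one_le_exp (-(y / n))]
  rw [abs_mul, Nat.abs_cast, abs_of_nonpos (by linarith)]
  rcases n.eq_zero_or_pos with rfl | hn
  · simpa using hy
  · calc (n : ℝ) * -(Real.exp (-(y / n)) - 1) ≤ n * (y / n) := by gcongr; linarith
      _ = y := by field_simp

lemma tendsto_integral_exp_neg_div_pow {Ω : Type*} [MeasurableSpace Ω] {μ : Measure Ω}
    [IsProbabilityMeasure μ] {Y : Ω → ℝ} (hY : Integrable Y μ) (hY0 : 0 ≤ᵐ[μ] Y) :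
    Tendsto (fun n : ℕ => (∫ ω, Real.exp (-(Y ω / n)) ∂μ) ^ n) atTop
      (𝓝 (Real.exp (-∫ ω, Y ω ∂μ))) := by
  have hint : ∀ n : ℕ, Integrable (fun ω => Real.exp (-(Y ω / n))) μ := fun n => by
    refine (integrable_const 1).mono' (by fun_prop) ?_
    filter_upwards [hY0] with ω hω
    rw [Real.norm_eq_abs, abs_of_pos (Real.exp_pos _), Real.exp_le_one_iff, neg_nonpos]
    exact div_nonneg hω n.cast_nonneg
  have hDCT : Tendsto (fun n : ℕ => ∫ ω, (n : ℝ) * (Real.exp (-(Y ω / n)) - 1) ∂μ) atTop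
      (𝓝 (∫ ω, -Y ω ∂μ)) :=
    tendsto_integral_of_dominated_convergence Y (fun n => by fun_prop) hY
      (fun n => by filter_upwards [hY0] with ω hω using abs_nat_mul_exp_neg_div_sub_one_le hω n)
      (ae_of_all _ fun ω => tendsto_nat_mul_exp_neg_div_sub_one (Y ω))
  have hmul : ∀ n : ℕ, ∫ ω, (n : ℝ) * (Real.exp (-(Y ω / n)) - 1) ∂μ
      = n * ((∫ ω, Real.exp (-(Y ω / n)) ∂μ) - 1) := fun n => by
    rw [integral_const_mul, integral_sub (hint n) (integrable_const 1), integral_const]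
    simp
  rw [integral_neg] at hDCT
  simp_rw [hmul] at hDCT
  simpa using Real.tendsto_one_add_pow_exp_of_tendsto hDCT

lemma abs_rpow_neg_one_div_mul_rpow {x α : ℝ} (hx : 0 < x) (hα : α ≠ 0) (u : ℝ) :
    |x ^ (-(1 / α)) * u| ^ α = |u| ^ α / x := by
  rw [abs_mul, abs_of_nonneg (Real.rpow_nonneg hx.le _), Real.mul_rpow (Real.rpow_nonneg hx.le _)
    (abs_nonneg u), ← Real.rpow_mul hx.le, show -(1 / α) * α = -1 by field_simp,
    Real.rpow_neg_one, inv_mul_eq_div]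

lemma MeasureTheory.Integrable.abs_inner_rpow {Ω E : Type*} [MeasurableSpace Ω] {μ : Measure Ω}
    [NormedAddCommGroup E] [InnerProductSpace ℝ E] {α : ℝ} (hα : 0 ≤ α) {Z : Ω → E}
    (hZ : AEStronglyMeasurable Z μ) (hint : Integrable (fun ω => ‖Z ω‖ ^ α) μ) (t : E) :
    Integrable (fun ω => |⟪Z ω, t⟫_ℝ| ^ α) μ := by
  refine (hint.mul_const (‖t‖ ^ α)).mono' (by fun_prop) (ae_of_all _ fun ω => ?_)
  rw [Real.norm_eq_abs, abs_of_nonneg (by positivity), ← Real.mul_rpow (norm_nonneg _)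
    (norm_nonneg _)]
  exact Real.rpow_le_rpow (abs_nonneg _) (abs_real_inner_le_norm _ _) hα

section StableSums

variable {Ω : Type*} [MeasurableSpace Ω] {μ : Measure Ω} {α σw σb : ℝ}
  {w : ℕ → Ω → ℝ} {b : Ω → ℝ}

lemma integral_exp_I_mul_stable_sum (hwmeas : ∀ j, Measurable (w j)) (hbmeas : Measurable b)
    (hwbindep : iIndepFun (fun i : Option ℕ => (i.elim b w : Ω → ℝ)) μ)
    (hw : ∀ j, ∀ s : ℝ, ∫ ω, Complex.exp (Complex.I * (s : ℂ) * (w j ω : ℂ)) ∂μ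
        = Complex.exp ((-(σw ^ α * |s| ^ α) : ℝ) : ℂ))
    (hb : ∀ s : ℝ, ∫ ω, Complex.exp (Complex.I * (s : ℂ) * (b ω : ℂ)) ∂μ
        = Complex.exp ((-(σb ^ α * |s| ^ α) : ℝ) : ℂ))
    (n : ℕ) (d : ℕ → ℝ) (β : ℝ) :
    ∫ ω, Complex.exp (Complex.I * ((∑ j ∈ Finset.range n, d j * w j ω + β * b ω : ℝ) : ℂ)) ∂μ
      = ((Real.exp (-(σb ^ α * |β| ^ α))
          * ∏ j ∈ Finset.range n, Real.exp (-(σw ^ α * |d j| ^ α)) : ℝ) : ℂ) := by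
  have hsum (ω : Ω) : ∑ j ∈ Finset.range n, d j * w j ω + β * b ω
      = ∑ i ∈ Finset.insertNone (Finset.range n), i.elim β d * (i.elim b w : Ω → ℝ) ω := by
    rw [Finset.sum_insertNone, add_comm]
    rfl
  have hmeas : ∀ i : Option ℕ, Measurable (i.elim b w : Ω → ℝ)
    | none => hbmeas
    | some j => hwmeas j
  simp_rw [hsum]
  rw [hwbindep.integral_exp_I_mul_sum hmeas, Finset.prod_insertNone]
  simp only [Option.elim, hb, hw]
  push_cast
  rfl

variable [IsProbabilityMeasure μ]

lemma integral_exp_I_mul_stable_sum_iid_coeff {G : ℕ → Ω → ℝ} (hGmeas : ∀ j, Measurable (G j))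
    (hGindep : iIndepFun G μ) (hGid : ∀ j, IdentDistrib (G j) (G 0) μ μ)
    (hwmeas : ∀ j, Measurable (w j)) (hbmeas : Measurable b)
    (hwbindep : iIndepFun (fun i : Option ℕ => (i.elim b w : Ω → ℝ)) μ)
    (hw : ∀ j, ∀ s : ℝ, ∫ ω, Complex.exp (Complex.I * (s : ℂ) * (w j ω : ℂ)) ∂μ
        = Complex.exp ((-(σw ^ α * |s| ^ α) : ℝ) : ℂ))
    (hb : ∀ s : ℝ, ∫ ω, Complex.exp (Complex.I * (s : ℂ) * (b ω : ℂ)) ∂μ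
        = Complex.exp ((-(σb ^ α * |s| ^ α) : ℝ) : ℂ))
    (hcross : IndepFun (fun ω j => G j ω) (fun ω => ((fun j => w j ω), b ω)) μ)
    (a β : ℝ) (n : ℕ) :
    ∫ ω, Complex.exp (Complex.I
        * ((a * ∑ j ∈ Finset.range n, w j ω * G j ω + b ω * β : ℝ) : ℂ)) ∂μ
      = ((Real.exp (-(σb ^ α * |β| ^ α))
          * (∫ ω, Real.exp (-(σw ^ α * |a * G 0 ω| ^ α)) ∂μ) ^ n : ℝ) : ℂ) := by
  set X : Ω → ℕ → ℝ := fun ω j => G j ω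
  set Y : Ω → (ℕ → ℝ) × ℝ := fun ω => ((fun j => w j ω), b ω)
  have hX : Measurable X := measurable_pi_lambda _ hGmeas
  have hY : Measurable Y := (measurable_pi_lambda _ hwmeas).prodMk hbmeas
  set H : (ℕ → ℝ) × ((ℕ → ℝ) × ℝ) → ℂ := fun p => Complex.exp (Complex.I
    * ((a * ∑ j ∈ Finset.range n, p.2.1 j * p.1 j + p.2.2 * β : ℝ) : ℂ))
  have hH : Integrable H ((μ.map X).prod (μ.map Y)) := by
    refine (integrable_const (1 : ℝ)).mono' (by fun_prop) (ae_of_all _ fun p => ?_)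
    simp only [H]
    rw [mul_comm, Complex.norm_exp_ofReal_mul_I]
  set e : ℝ → ℝ := fun u => Real.exp (-(σw ^ α * |a * u| ^ α))
  have he : Measurable e :=
    Real.measurable_exp.comp (((measurable_id.const_mul a).abs.pow_const α).const_mul _).neg
  have hinner (x : ℕ → ℝ) : ∫ y, H (x, y) ∂(μ.map Y)
      = ((Real.exp (-(σb ^ α * |β| ^ α)) * ∏ j ∈ Finset.range n, e (x j) : ℝ) : ℂ) := by
    rw [integral_map hY.aemeasurable (by fun_prop)]
    convert integral_exp_I_mul_stable_sum hwmeas hbmeas hwbindep hw hb n (fun j => a * x j) β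
      using 5 with ω
    congr 1
    dsimp only [Y]
    rw [Finset.mul_sum, mul_comm (b ω) β]
    exact congrArg (· + β * b ω) (Finset.sum_congr rfl fun j _ => by ring)
  calc _ = ∫ ω, H (X ω, Y ω) ∂μ := rfl
    _ = ∫ x, ∫ y, H (x, y) ∂(μ.map Y) ∂(μ.map X) :=
      hcross.integral_comp_prodMk hX.aemeasurable hY.aemeasurable hH
    _ = ((Real.exp (-(σb ^ α * |β| ^ α))
          * ∫ ω, ∏ j ∈ Finset.range n, e (G j ω) ∂μ : ℝ) : ℂ) := by
      simp_rw [hinner]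
      rw [integral_complex_ofReal, integral_const_mul,
        integral_map (f := fun x => ∏ j ∈ Finset.range n, e (x j)) hX.aemeasurable
          (Finset.measurable_prod _ fun j _ =>
            he.comp (measurable_pi_apply j)).aestronglyMeasurable]
    _ = _ := by rw [hGindep.integral_prod_range_comp hGmeas hGid he]

end StableSums

theorem stable_shallow_limit_charFun_general
    {Ω : Type*} [MeasurableSpace Ω] (μ : Measure Ω) [IsProbabilityMeasure μ]
    (α σw σb : ℝ) (hα0 : 0 < α) (hσw : 0 < σw)
    (k : ℕ) (φ : ℝ → ℝ) (hφ : Measurable φ)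
    (φv : EuclideanSpace ℝ (Fin k) → EuclideanSpace ℝ (Fin k))
    (hφv : ∀ x r, φv x r = φ (x r))
    (F : ℕ → Ω → EuclideanSpace ℝ (Fin k)) (hFmeas : ∀ j, Measurable (F j))
    (hFindep : iIndepFun F μ)
    (hFid : ∀ j, IdentDistrib (F j) (F 0) μ μ)
    (hφint : Integrable (fun ω => ‖φv (F 0 ω)‖ ^ α) μ)
    (w : ℕ → Ω → ℝ) (b : Ω → ℝ)
    (hwmeas : ∀ j, Measurable (w j)) (hbmeas : Measurable b)
    (hwbindep : iIndepFun
      (fun i : Option ℕ => (i.elim b w : Ω → ℝ)) μ)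
    (hw : ∀ j, ∀ s : ℝ, ∫ ω, Complex.exp (Complex.I * (s : ℂ) * (w j ω : ℂ)) ∂μ
        = Complex.exp ((-(σw ^ α * |s| ^ α) : ℝ) : ℂ))
    (hb : ∀ s : ℝ, ∫ ω, Complex.exp (Complex.I * (s : ℂ) * (b ω : ℂ)) ∂μ
        = Complex.exp ((-(σb ^ α * |s| ^ α) : ℝ) : ℂ))
    (hcross : IndepFun (fun ω => fun j => F j ω)
      (fun ω => ((fun j => w j ω), b ω)) μ)
    (ones : EuclideanSpace ℝ (Fin k))
    (S : ℕ → Ω → EuclideanSpace ℝ (Fin k))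
    (hS : ∀ n ω, S n ω = ((n : ℝ) ^ (-(1 / α))) •
        (∑ j ∈ Finset.range n, w j ω • φv (F j ω)) + b ω • ones)
    (t : EuclideanSpace ℝ (Fin k)) :
    Tendsto (fun n => ∫ ω, Complex.exp (Complex.I * ((⟪S n ω, t⟫_ℝ : ℝ) : ℂ)) ∂μ)
      atTop
      (𝓝 (Complex.exp ((-(σb ^ α * |⟪ones, t⟫_ℝ| ^ α
        + σw ^ α * ∫ ω, |⟪φv (F 0 ω), t⟫_ℝ| ^ α ∂μ) : ℝ) : ℂ))) := by
  have hφvm : Measurable φv := by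
    have : φv = fun x => WithLp.toLp 2 fun r => φ (x r) := funext fun x => by ext r; exact hφv x r
    rw [this]
    fun_prop
  set g : EuclideanSpace ℝ (Fin k) → ℝ := fun x => ⟪φv x, t⟫_ℝ
  have hg : Measurable g := by fun_prop
  have hcharFun (n : ℕ) := integral_exp_I_mul_stable_sum_iid_coeff (G := fun j ω => g (F j ω))
    (fun j => hg.comp (hFmeas j))
    (hFindep.comp (fun _ => g) fun _ => hg) (fun j => (hFid j).comp hg)
    hwmeas hbmeas hwbindep hw hb
    (hcross.comp (measurable_pi_lambda _ fun j => hg.comp (measurable_pi_apply j)) measurable_id)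
    ((n : ℝ) ^ (-(1 / α))) ⟪ones, t⟫_ℝ n
  have hY : Integrable (fun ω => σw ^ α * |g (F 0 ω)| ^ α) μ :=
    (hφint.abs_inner_rpow hα0.le (hφvm.comp (hFmeas 0)).aestronglyMeasurable t).const_mul _
  have hlim := tendsto_integral_exp_neg_div_pow hY (ae_of_all _ fun ω =>
    mul_nonneg (Real.rpow_nonneg hσw.le α) (Real.rpow_nonneg (abs_nonneg _) α))
  rw [integral_const_mul] at hlim
  rw [← Complex.ofReal_exp, neg_add, Real.exp_add]
  refine ((Complex.continuous_ofReal.tendsto _).comp (hlim.const_mul _)).congr' ?_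
  filter_upwards [eventually_gt_atTop 0] with n hn
  have hinner (ω : Ω) : ⟪S n ω, t⟫_ℝ
      = (n : ℝ) ^ (-(1 / α)) * ∑ j ∈ Finset.range n, w j ω * g (F j ω) + b ω * ⟪ones, t⟫_ℝ := by
    simp [hS, g, inner_add_left, real_inner_smul_left, sum_inner]
  simp_rw [hinner, hcharFun, abs_rpow_neg_one_div_mul_rpow (Nat.cast_pos.mpr hn) hα0.ne',
    mul_div_assoc]
  rfl

/-- Shallow (one-layer) case of Theorem 2 of the paper: for i.i.d. random vectors `F_j` in
`ℝ^k`, i.i.d. symmetric α-stable weights `w_j` (scale `σ_w`) and an independent symmetric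
α-stable bias `b` (scale `σ_b`), with `E[‖φ∘F_1‖^α] < ∞`, the characteristic function of
`S_n = n^{-1/α} Σ_{j=1}^n w_j (φ∘F_j) + b 𝟏` converges pointwise to that of the limiting
multivariate α-stable law. -/
theorem stable_shallow_limit_charFun
    {Ω : Type*} [MeasurableSpace Ω] (μ : Measure Ω) [IsProbabilityMeasure μ]
    (α σw σb : ℝ) (hα0 : 0 < α) (hα2 : α < 2) (hσw : 0 < σw) (hσb : 0 < σb)
    (k : ℕ) (φ : ℝ → ℝ) (hφ : Measurable φ)
    (φv : EuclideanSpace ℝ (Fin k) → EuclideanSpace ℝ (Fin k))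
    (hφv : ∀ x r, φv x r = φ (x r))
    (F : ℕ → Ω → EuclideanSpace ℝ (Fin k)) (hFmeas : ∀ j, Measurable (F j))
    (hFindep : iIndepFun F μ)
    (hFid : ∀ j, IdentDistrib (F j) (F 0) μ μ)
    (hφint : Integrable (fun ω => ‖φv (F 0 ω)‖ ^ α) μ)
    (w : ℕ → Ω → ℝ) (b : Ω → ℝ)
    (hwmeas : ∀ j, Measurable (w j)) (hbmeas : Measurable b)
    (hwbindep : iIndepFun
      (fun i : Option ℕ => (i.elim b w : Ω → ℝ)) μ)
    (hw : ∀ j, ∀ s : ℝ, ∫ ω, Complex.exp (Complex.I * (s : ℂ) * (w j ω : ℂ)) ∂μ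
        = Complex.exp ((-(σw ^ α * |s| ^ α) : ℝ) : ℂ))
    (hb : ∀ s : ℝ, ∫ ω, Complex.exp (Complex.I * (s : ℂ) * (b ω : ℂ)) ∂μ
        = Complex.exp ((-(σb ^ α * |s| ^ α) : ℝ) : ℂ))
    (hcross : IndepFun (fun ω => fun j => F j ω)
      (fun ω => ((fun j => w j ω), b ω)) μ)
    (ones : EuclideanSpace ℝ (Fin k)) (hones : ∀ i, ones i = 1)
    (S : ℕ → Ω → EuclideanSpace ℝ (Fin k))
    (hS : ∀ n ω, S n ω = ((n : ℝ) ^ (-(1 / α))) •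
        (∑ j ∈ Finset.range n, w j ω • φv (F j ω)) + b ω • ones)
    (t : EuclideanSpace ℝ (Fin k)) :
    Tendsto (fun n => ∫ ω, Complex.exp (Complex.I * ((⟪S n ω, t⟫_ℝ : ℝ) : ℂ)) ∂μ)
      atTop
      (𝓝 (Complex.exp ((-(σb ^ α * |⟪ones, t⟫_ℝ| ^ α
        + σw ^ α * ∫ ω, |⟪φv (F 0 ω), t⟫_ℝ| ^ α ∂μ) : ℝ) : ℂ))) :=
  stable_shallow_limit_charFun_general μ α σw σb hα0 hσw k φ hφ φv hφv F hFmeas hFindep hFid hφint w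
    b hwmeas hbmeas hwbindep hw hb hcross ones S hS t
end
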